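/- arXiv:2512.24383 — 4 statements merged into one kernel-verified Lean document; each statement's English description precedes it below -/
import Mathlib

section
/- For any p ≥ 2 and any vectors a, b, c in ℝ^d, one has (a - b) · (|a-c|^{p-2}(a-c) - |b-c|^{p-2}(b-c)) ≥ 2^{2-p} |a-b|^p. -/
open scoped InnerProductSpace

/-! With `u = a - c`, `v = b - c`, `s = ‖u‖`, `r = ‖v‖`, `w = ‖u - v‖`, polarization writes the
inner product as `((s^(p-2) - r^(p-2)) (s² - r²) + (s^(p-2) + r^(p-2)) w²) / 2`, whose first
summand is nonnegative. Since `w ↦ w² ((s^(p-2) + r^(p-2))/2 - 2^(2-p) w^(p-2))` first increases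
and then decreases, it suffices to check the scalar inequality at the ends of `[0, s + r]`:
at `w = 0` it is the nonnegativity of the first summand, and at `w = s + r` the right-hand side
is `(s + r)(s^(p-1) + r^(p-1))`, so it is the power-mean inequality
`((s + r)/2)^(p-1) ≤ (s^(p-1) + r^(p-1))/2`. -/

lemma inner_sub_smul_sub_smul {E : Type*} [NormedAddCommGroup E] [InnerProductSpace ℝ E]
    (S R : ℝ) (u v : E) :
    ⟪u - v, S • u - R • v⟫_ℝ =
      ((S - R) * (‖u‖ ^ 2 - ‖v‖ ^ 2) + (S + R) * ‖u - v‖ ^ 2) / 2 := by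
  rw [norm_sub_sq_real, inner_sub_left, inner_sub_right, inner_sub_right, real_inner_smul_right,
    real_inner_smul_right, real_inner_smul_right, real_inner_smul_right,
    real_inner_self_eq_norm_sq, real_inner_self_eq_norm_sq, real_inner_comm v u]
  ring

lemma Real.rpow_add_le_mul_rpow_add_rpow {s r q : ℝ} (hs : 0 ≤ s) (hr : 0 ≤ r)
    (hq : 1 ≤ q) :
    (s + r) ^ q ≤ 2 ^ (q - 1) * (s ^ q + r ^ q) := by
  have h :=
    NNReal.coe_le_coe.2 (NNReal.rpow_add_le_mul_rpow_add_rpow s.toNNReal r.toNNReal hq)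
  push_cast [NNReal.coe_rpow] at h
  rwa [Real.coe_toNNReal s hs, Real.coe_toNNReal r hr] at h

lemma two_rpow_two_sub_mul_add_rpow_le {s r p : ℝ} (hs : 0 ≤ s) (hr : 0 ≤ r) (hp : 2 ≤ p) :
    2 ^ (2 - p) * (s + r) ^ p ≤ (s + r) * (s ^ (p - 1) + r ^ (p - 1)) := by
  have hsr : 0 ≤ s + r := add_nonneg hs hr
  have hmean : (s + r) ^ (p - 1) ≤ 2 ^ (p - 2) * (s ^ (p - 1) + r ^ (p - 1)) := by
    simpa only [show p - 1 - 1 = p - 2 by ring] using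
      Real.rpow_add_le_mul_rpow_add_rpow hs hr (show 1 ≤ p - 1 by linarith)
  have htwo : (2 : ℝ) ^ (2 - p) * 2 ^ (p - 2) = 1 := by
    rw [← Real.rpow_add two_pos]; norm_num
  calc 2 ^ (2 - p) * (s + r) ^ p = 2 ^ (2 - p) * (s + r) ^ (p - 1) * (s + r) := by
        rw [mul_assoc, ← Real.rpow_add_one' hsr (by linarith), sub_add_cancel]
    _ ≤ 2 ^ (2 - p) * (2 ^ (p - 2) * (s ^ (p - 1) + r ^ (p - 1))) * (s + r) := by gcongr
    _ = (s + r) * (s ^ (p - 1) + r ^ (p - 1)) := by rw [← mul_assoc, htwo]; ring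

lemma rpow_sub_rpow_mul_sq_sub_sq_nonneg {s r q : ℝ} (hs : 0 ≤ s) (hr : 0 ≤ r)
    (hq : 0 ≤ q) :
    0 ≤ (s ^ q - r ^ q) * (s ^ 2 - r ^ 2) :=
  ((Real.monotoneOn_rpow_Ici_of_exponent_nonneg hq).monovaryOn
    (pow_left_monotoneOn (n := 2))).sub_mul_sub_nonneg
      (Set.mem_Ici.2 hr) (Set.mem_Ici.2 hs)

/-- With `x = g w` and `y = g M` for an antitone `g`: on `[0, M]`, `w ↦ w² g w` is nonnegative or
at least its value at `M`. -/
lemma sq_mul_nonneg_or_le_of_le {w M x y : ℝ} (hw : 0 ≤ w) (hwM : w ≤ M) (hyx : y ≤ x) :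
    0 ≤ w ^ 2 * x ∨ M ^ 2 * y ≤ w ^ 2 * x := by
  rcases le_or_gt 0 x with hx | hx
  · exact Or.inl (by positivity)
  · have hsq : w ^ 2 ≤ M ^ 2 := pow_le_pow_left₀ hw hwM 2
    exact Or.inr (by nlinarith)

lemma two_rpow_two_sub_mul_rpow_le {s r w p : ℝ} (hs : 0 ≤ s) (hr : 0 ≤ r) (hw : 0 ≤ w)
    (hwsr : w ≤ s + r) (hp : 2 ≤ p) :
    2 ^ (2 - p) * w ^ p ≤
      ((s ^ (p - 2) - r ^ (p - 2)) * (s ^ 2 - r ^ 2) +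
        (s ^ (p - 2) + r ^ (p - 2)) * w ^ 2) / 2 := by
  have hsr : 0 ≤ s + r := add_nonneg hs hr
  have hsplit : ∀ x : ℝ, 0 ≤ x → x ^ p = x ^ 2 * x ^ (p - 2) := fun x hx => by
    rw [mul_comm, ← Real.rpow_add_natCast' hx (by push_cast; linarith)]; norm_num
  have hpred : ∀ x : ℝ, 0 ≤ x → x ^ (p - 1) = x ^ (p - 2) * x := fun x hx => by
    rw [← Real.rpow_add_one' hx (by linarith)]; ring_nf
  have hfirst := rpow_sub_rpow_mul_sq_sub_sq_nonneg hs hr (show 0 ≤ p - 2 by linarith)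
  have hend := two_rpow_two_sub_mul_add_rpow_le hs hr hp
  rw [hsplit w hw]
  rw [hsplit (s + r) hsr, hpred s hs, hpred r hr] at hend
  have hanti : (s ^ (p - 2) + r ^ (p - 2)) / 2 - 2 ^ (2 - p) * (s + r) ^ (p - 2) ≤
      (s ^ (p - 2) + r ^ (p - 2)) / 2 - 2 ^ (2 - p) * w ^ (p - 2) := by
    gcongr
  rcases sq_mul_nonneg_or_le_of_le hw hwsr hanti with h | h
  · linear_combination h + hfirst / 2
  · linear_combination h + hend

theorem elementary_vector_inequality (d : ℕ) (p : ℝ) (hp : 2 ≤ p)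
    (a b c : EuclideanSpace ℝ (Fin d)) :
    (2 : ℝ) ^ (2 - p) * ‖a - b‖ ^ p ≤
      ⟪a - b, (‖a - c‖ ^ (p - 2)) • (a - c) - (‖b - c‖ ^ (p - 2)) • (b - c)⟫_ℝ := by
  rw [show a - b = (a - c) - (b - c) by abel, inner_sub_smul_sub_smul]
  exact two_rpow_two_sub_mul_rpow_le (norm_nonneg _) (norm_nonneg _) (norm_nonneg _)
    (norm_sub_le _ _) hp
end

section
/- Let β > 2 and C > 0. Suppose a, b : [0,∞) → [0,∞) are differentiable with a(0) = a₀, b(0) = b₀, a'(t) ≤ b(t) and b'(t) ≤ C (1+t²)^{-β/2} a(t) for all t ≥ 0. Then there exist constants C₁, C₂ > 0 (depending only on C, β, a₀, b₀) such that b(t) ≤ C₁ and a(t) ≤ a₀ + C₁ t for all t ≥ 0. -/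
/-!
Since `⟨t⟩^{-β} ≤ 2^{β/2} (1+t)^{-β}`, the weight `w(t) = K (1+t)^{1-β}` with
`K = C 2^{β/2} / (β - 1)` satisfies `-w' ≥ C ⟨t⟩^{-β}`, and it is integrable on `[0, ∞)`
because `β > 2`. Hence the energy `E = b + w a` satisfies `E' ≤ w b ≤ w E`, and the
integrating factor `exp (-∫ w)` bounds `b ≤ E` by `E(0) exp (∫₀^∞ w)`. The linear bound on `a`
is then the mean value theorem.
-/

open Real Set

theorem le_mul_exp_sub_of_hasDerivAt_le_mul {f f' φ φ' : ℝ → ℝ} {t₀ : ℝ}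
    (hf : ∀ s ∈ Ici t₀, HasDerivAt f (f' s) s) (hφ : ∀ s ∈ Ici t₀, HasDerivAt φ (φ' s) s)
    (hle : ∀ s ∈ Ioi t₀, f' s ≤ φ' s * f s) :
    ∀ t ∈ Ici t₀, f t ≤ f t₀ * exp (φ t - φ t₀) := by
  have hg : ∀ s ∈ Ici t₀, HasDerivAt (fun s ↦ f s * exp (-φ s))
      ((f' s - φ' s * f s) * exp (-φ s)) s := fun s hs ↦
    ((hf s hs).fun_mul (hφ s hs).fun_neg.exp).congr_deriv (by ring)
  have hanti : AntitoneOn (fun s ↦ f s * exp (-φ s)) (Ici t₀) := by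
    refine antitoneOn_of_hasDerivWithinAt_nonpos (f' := fun s ↦ (f' s - φ' s * f s) * exp (-φ s))
      (convex_Ici t₀) (fun s hs ↦ (hg s hs).continuousAt.continuousWithinAt)
      (fun s hs ↦ ?_) (fun s hs ↦ ?_)
    all_goals rw [interior_Ici] at hs
    · exact (hg s (mem_Ici_of_Ioi hs)).hasDerivWithinAt
    · exact mul_nonpos_of_nonpos_of_nonneg (sub_nonpos.2 (hle s hs)) (exp_pos _).le
  intro t ht
  calc f t = f t * exp (-φ t) * exp (φ t) := by
        rw [mul_assoc, ← exp_add, neg_add_cancel, exp_zero, mul_one]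
    _ ≤ f t₀ * exp (-φ t₀) * exp (φ t) :=
        mul_le_mul_of_nonneg_right (hanti self_mem_Ici ht ht) (exp_pos _).le
    _ = f t₀ * exp (φ t - φ t₀) := by rw [mul_assoc, ← exp_add, neg_add_eq_sub]

theorem one_add_sq_rpow_neg_half_le {β t : ℝ} (hβ : 0 ≤ β) (ht : 0 < 1 + t) :
    (1 + t ^ 2) ^ (-β / 2) ≤ 2 ^ (β / 2) * (1 + t) ^ (-β) := by
  have hsq : (1 + t) ^ (-β) = ((1 + t) ^ 2) ^ (-β / 2) := by
    rw [← rpow_natCast, ← rpow_mul ht.le]; congr 1; push_cast; ring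
  have htwo : (2 : ℝ) ^ (β / 2) = 2⁻¹ ^ (-β / 2) := by
    rw [inv_rpow zero_le_two, ← rpow_neg zero_le_two, neg_div, neg_neg]
  rw [hsq, htwo, ← mul_rpow (by norm_num) (by positivity)]
  refine rpow_le_rpow_of_nonpos (by positivity) ?_ (by linarith)
  nlinarith [sq_nonneg (t - 1)]

theorem hasDerivAt_one_add_rpow {p t : ℝ} (ht : 0 < 1 + t) :
    HasDerivAt (fun s ↦ (1 + s) ^ p) (p * (1 + t) ^ (p - 1)) t := by
  simpa using ((hasDerivAt_id t).const_add 1).rpow_const (p := p) (Or.inl ht.ne')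

theorem le_mul_exp_of_deriv_le_rpow_neg_mul {L β : ℝ} (hL : 0 ≤ L) (hβ : 2 < β)
    {a b : ℝ → ℝ} (ha : Differentiable ℝ a) (hb : Differentiable ℝ b)
    (ha_nonneg : ∀ t, 0 ≤ t → 0 ≤ a t) (hb₀ : 0 ≤ b 0)
    (hab : ∀ t, 0 < t → deriv a t ≤ b t)
    (hba : ∀ t, 0 < t → deriv b t ≤ L * (1 + t) ^ (-β) * a t) {t : ℝ} (ht : 0 ≤ t) :
    b t ≤ (b 0 + L / (β - 1) * a 0) * exp (L / ((β - 1) * (β - 2))) := by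
  have hβ₁ : β - 1 ≠ 0 := by linarith
  have hβ₂ : β - 2 ≠ 0 := by linarith
  set K := L / (β - 1) with hK
  have hK_nonneg : 0 ≤ K := div_nonneg hL (by linarith)
  set w : ℝ → ℝ := fun s ↦ K * (1 + s) ^ (1 - β) with hw
  set Φ : ℝ → ℝ := fun s ↦ -(K / (β - 2)) * (1 + s) ^ (2 - β) with hΦ
  have hpos : ∀ s ∈ Ici (0 : ℝ), 0 < 1 + s := fun s hs ↦ by linarith [mem_Ici.1 hs]
  have hw_nonneg : ∀ s ∈ Ici (0 : ℝ), 0 ≤ w s := fun s hs ↦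
    mul_nonneg hK_nonneg (rpow_nonneg (hpos s hs).le _)
  have hw' : ∀ s ∈ Ici (0 : ℝ), HasDerivAt w (-(L * (1 + s) ^ (-β))) s := fun s hs ↦
    ((hasDerivAt_one_add_rpow (hpos s hs)).const_mul K).congr_deriv <| by
      rw [show 1 - β - 1 = -β by ring, hK]; field_simp; ring
  have hΦ' : ∀ s ∈ Ici (0 : ℝ), HasDerivAt Φ (w s) s := fun s hs ↦
    ((hasDerivAt_one_add_rpow (hpos s hs)).const_mul _).congr_deriv <| by
      rw [show 2 - β - 1 = 1 - β by ring]; field_simp; ring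
  have hE : ∀ s ∈ Ici (0 : ℝ), HasDerivAt (fun s ↦ b s + w s * a s)
      (deriv b s + (-(L * (1 + s) ^ (-β)) * a s + w s * deriv a s)) s := fun s hs ↦
    (hb s).hasDerivAt.add ((hw' s hs).mul (ha s).hasDerivAt)
  have hE_le : ∀ s ∈ Ioi (0 : ℝ),
      deriv b s + (-(L * (1 + s) ^ (-β)) * a s + w s * deriv a s) ≤ w s * (b s + w s * a s) := by
    intro s hs
    have hs₀ : s ∈ Ici (0 : ℝ) := mem_Ici_of_Ioi hs
    have := mul_le_mul_of_nonneg_left (hab s hs) (hw_nonneg s hs₀)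
    have := mul_nonneg (hw_nonneg s hs₀) (mul_nonneg (hw_nonneg s hs₀) (ha_nonneg s hs₀))
    linarith [hba s hs]
  have hgronwall := le_mul_exp_sub_of_hasDerivAt_le_mul hE hΦ' hE_le t ht
  have hΦ_sub : Φ t - Φ 0 ≤ L / ((β - 1) * (β - 2)) := by
    have : 0 ≤ K / (β - 2) * (1 + t) ^ (2 - β) :=
      mul_nonneg (div_nonneg hK_nonneg (by linarith)) (rpow_nonneg (hpos t ht).le _)
    simp only [hΦ, add_zero, one_rpow, mul_one, hK, div_div] at this ⊢
    linarith
  calc b t ≤ b t + w t * a t :=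
        le_add_of_nonneg_right (mul_nonneg (hw_nonneg t ht) (ha_nonneg t ht))
    _ ≤ (b 0 + w 0 * a 0) * exp (Φ t - Φ 0) := hgronwall
    _ ≤ (b 0 + K * a 0) * exp (L / ((β - 1) * (β - 2))) := by
      simp only [hw, add_zero, one_rpow, mul_one]
      gcongr
      exact add_nonneg hb₀ (mul_nonneg hK_nonneg (ha_nonneg 0 le_rfl))

theorem aux_lemma_beta_gt_two_sourceless (C β a₀ b₀ : ℝ) (hC : 0 < C) (hβ : 2 < β)
    (a b : ℝ → ℝ) (had : Differentiable ℝ a) (hbd : Differentiable ℝ b)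
    (hann : ∀ t, 0 ≤ t → 0 ≤ a t) (hbnn : ∀ t, 0 ≤ t → 0 ≤ b t)
    (ha0 : a 0 = a₀) (hb0 : b 0 = b₀)
    (hab : ∀ t, 0 ≤ t → deriv a t ≤ b t)
    (hba : ∀ t, 0 ≤ t → deriv b t ≤ C * (1 + t ^ 2) ^ (-β / 2) * a t) :
    ∃ C₁ C₂ : ℝ, 0 < C₁ ∧ 0 < C₂ ∧
      ∀ t, 0 ≤ t → b t ≤ C₁ ∧ a t ≤ a₀ + C₁ * t := by
  have hba' : ∀ t, 0 < t → deriv b t ≤ C * 2 ^ (β / 2) * (1 + t) ^ (-β) * a t := fun t ht ↦ by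
    have hweight : (1 + t ^ 2) ^ (-β / 2) ≤ 2 ^ (β / 2) * (1 + t) ^ (-β) :=
      one_add_sq_rpow_neg_half_le (by linarith) (by linarith)
    calc deriv b t ≤ C * (1 + t ^ 2) ^ (-β / 2) * a t := hba t ht.le
      _ ≤ C * (2 ^ (β / 2) * (1 + t) ^ (-β)) * a t := by gcongr; exact hann t ht.le
      _ = C * 2 ^ (β / 2) * (1 + t) ^ (-β) * a t := by ring
  set L := C * 2 ^ (β / 2)
  set C₁ := max ((b₀ + L / (β - 1) * a₀) * exp (L / ((β - 1) * (β - 2)))) 1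
  have hb_le : ∀ t, 0 ≤ t → b t ≤ C₁ := fun t ht ↦ by
    have := le_mul_exp_of_deriv_le_rpow_neg_mul (by positivity) hβ had hbd hann
      (hbnn 0 le_rfl) (fun s hs ↦ hab s hs.le) hba' ht
    rw [ha0, hb0] at this
    exact this.trans (le_max_left _ _)
  refine ⟨C₁, 1, one_pos.trans_le (le_max_right _ _), one_pos, fun t ht ↦ ⟨hb_le t ht, ?_⟩⟩
  have := (convex_Ici 0).image_sub_le_mul_sub_of_deriv_le had.continuous.continuousOn
    had.differentiableOn (fun s hs ↦ (hab s (interior_subset hs)).trans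
      (hb_le s (interior_subset hs))) 0 self_mem_Ici t ht ht
  rw [ha0, sub_zero] at this
  linarith
end

section
/- Let β > 2, C > 0, and g : [0,∞) → [0,∞) locally integrable. Suppose a, b : [0,∞) → [0,∞) are differentiable with a(0) = a₀, b(0) = b₀, a'(t) ≤ b(t) and b'(t) ≤ C ⟨t⟩^{-β} a(t) + g(t) for all t ≥ 0, where ⟨t⟩ = √(1+t²). Let G₁(t) = ∫₀ᵗ g(s) ds. Then there exist positive constants C₁, C₂ (depending only on C, β, a₀, b₀) such that b(t) ≤ C₁ + C₂ G₁(t) and a(t) ≤ a₀ + C₁ t + C₂ ∫₀ᵗ G₁(s) ds for all t ≥ 0. -/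
/-!
Take the weight `ε t = (1 + t²)^(-β/4) = ⟨t⟩^(-β/2)` and the functional `L = ε a + b`. Since `ε` is
decreasing, `ε a' ≤ ε b ≤ ε L` and `C ⟨t⟩^(-β) a = C ε (ε a) ≤ C ε L`, we get
`L' ≤ (1 + C) ε L + g`. As `β / 2 > 1`, `ε` is integrable on `ℝ`, so the integrating factor
`exp (∫₀ᵗ (1 + C) ε)` stays bounded and Grönwall gives `b ≤ L ≤ C₂ (L 0 + G₁)`; integrating
`a' ≤ b` then bounds `a`.
-/

open MeasureTheory Real Set

theorem le_exp_integral_mul_of_hasDerivAt_le {L L' h g : ℝ → ℝ} {T : ℝ} (hT : 0 ≤ T)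
    (hL : ∀ t, HasDerivAt L (L' t) t) (hh : Continuous h) (hh₀ : ∀ t ∈ Icc 0 T, 0 ≤ h t)
    (hg : IntervalIntegrable g volume 0 T) (hg₀ : ∀ t ∈ Icc 0 T, 0 ≤ g t)
    (hL' : ∀ t ∈ Ioo 0 T, L' t ≤ h t * L t + g t) :
    L T ≤ exp (∫ t in 0..T, h t) * (L 0 + ∫ t in 0..T, g t) := by
  set H : ℝ → ℝ := fun t => ∫ s in 0..t, h s
  have hH : ∀ t, HasDerivAt H (h t) t := fun t =>
    intervalIntegral.integral_hasDerivAt_right (hh.intervalIntegrable _ _)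
      (hh.stronglyMeasurableAtFilter _ _) hh.continuousAt
  set F : ℝ → ℝ := fun t => exp (-H t) * L t
  have hF : ∀ t, HasDerivAt F (exp (-H t) * (L' t - h t * L t)) t := fun t =>
    ((hH t).neg.exp.mul (hL t)).congr_deriv (by simp only [Pi.neg_apply]; ring)
  have hF_le : F T - F 0 ≤ ∫ t in 0..T, g t := by
    refine intervalIntegral.sub_le_integral_of_hasDeriv_right_of_le hT
      (fun t _ => (hF t).continuousAt.continuousWithinAt) (fun t _ => (hF t).hasDerivWithinAt)
      ((intervalIntegrable_iff_integrableOn_Icc_of_le hT).mp hg) fun t ht => ?_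
    have hHt : 0 ≤ H t :=
      intervalIntegral.integral_nonneg ht.1.le fun s hs => hh₀ s ⟨hs.1, hs.2.trans ht.2.le⟩
    calc exp (-H t) * (L' t - h t * L t) ≤ exp (-H t) * g t := by
          gcongr
          linarith [hL' t ht]
      _ ≤ g t := mul_le_of_le_one_left (hg₀ t (Ioo_subset_Icc_self ht))
          (exp_le_one_iff.mpr (neg_nonpos.mpr hHt))
  have hF₀ : F 0 = L 0 := by simp [F, H]
  calc L T = exp (H T) * F T := by
        simp only [F, ← mul_assoc, ← exp_add, add_neg_cancel, exp_zero, one_mul]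
    _ ≤ exp (H T) * (L 0 + ∫ t in 0..T, g t) := by gcongr; linarith

theorem integrable_one_add_sq_rpow {q : ℝ} (hq : q < -1 / 2) :
    Integrable fun t : ℝ => (1 + t ^ 2) ^ q := by
  have := integrable_rpow_neg_one_add_norm_sq (E := ℝ) (μ := volume) (r := -2 * q)
    (by simp; linarith)
  simpa [Real.norm_eq_abs, sq_abs, show -(-2 * q) / 2 = q by ring] using this

theorem hasDerivAt_one_add_sq_rpow (q t : ℝ) :
    HasDerivAt (fun t => (1 + t ^ 2) ^ q) (q * (1 + t ^ 2) ^ (q - 1) * (2 * t)) t := by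
  have h1 : HasDerivAt (fun t : ℝ => 1 + t ^ 2) (2 * t) t := by
    simpa using (hasDerivAt_pow 2 t).const_add 1
  convert h1.rpow_const (p := q) (Or.inl (by positivity)) using 1
  ring

theorem sqrt_one_add_sq_rpow_eq_sq (p t : ℝ) :
    √(1 + t ^ 2) ^ p = ((1 + t ^ 2) ^ (p / 4)) ^ 2 := by
  rw [sqrt_eq_rpow, ← rpow_mul (by positivity), ← rpow_mul_natCast (by positivity)]
  ring_nf

theorem lyapunov_deriv_le {e e' x y x' y' C g : ℝ} (hC : 0 ≤ C) (he : 0 ≤ e) (he' : e' ≤ 0)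
    (hx : 0 ≤ x) (hy : 0 ≤ y) (hx' : x' ≤ y) (hy' : y' ≤ C * e ^ 2 * x + g) :
    e' * x + e * x' + y' ≤ (1 + C) * e * (e * x + y) + g := by
  nlinarith [mul_nonpos_of_nonpos_of_nonneg he' hx, mul_le_mul_of_nonneg_left hx' he,
    mul_nonneg (mul_nonneg hC he) hy, mul_nonneg (mul_nonneg he he) hx]

theorem le_add_mul_add_integral_primitive_of_deriv_le {a g : ℝ → ℝ} {c d t : ℝ} (ht : 0 ≤ t)
    (ha : Differentiable ℝ a) (hg : ∀ u v, IntervalIntegrable g volume u v)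
    (ha' : ∀ s ∈ Ioo 0 t, deriv a s ≤ c + d * ∫ r in 0..s, g r) :
    a t ≤ a 0 + c * t + d * ∫ s in 0..t, ∫ r in 0..s, g r := by
  have hG : Continuous fun s => ∫ r in 0..s, g r := intervalIntegral.continuous_primitive hg 0
  have key := intervalIntegral.sub_le_integral_of_hasDeriv_right_of_le
    (φ := fun s => c + d * ∫ r in 0..s, g r) ht ha.continuous.continuousOn
    (fun s _ => (ha s).hasDerivAt.hasDerivWithinAt)
    (continuous_const.add (continuous_const.mul hG)).integrableOn_Icc ha'
  rw [intervalIntegral.integral_add (f := fun _ => c) (g := fun s => d * ∫ r in 0..s, g r)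
      intervalIntegrable_const ((continuous_const.mul hG).intervalIntegrable _ _),
    intervalIntegral.integral_const_mul, intervalIntegral.integral_const, smul_eq_mul,
    sub_zero] at key
  linarith

theorem lyapunov_le_exp_mul {C β : ℝ} {a b g : ℝ → ℝ} (hC : 0 ≤ C) (hβ : 2 < β)
    (hg₀ : ∀ t, 0 ≤ t → 0 ≤ g t) (hg : ∀ t, IntervalIntegrable g volume 0 t)
    (ha : Differentiable ℝ a) (hb : Differentiable ℝ b)
    (ha₀ : ∀ t, 0 ≤ t → 0 ≤ a t) (hb₀ : ∀ t, 0 ≤ t → 0 ≤ b t)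
    (hab : ∀ t, 0 ≤ t → deriv a t ≤ b t)
    (hba : ∀ t, 0 ≤ t → deriv b t ≤ C * √(1 + t ^ 2) ^ (-β) * a t + g t) {t : ℝ} (ht : 0 ≤ t) :
    (1 + t ^ 2) ^ (-β / 4) * a t + b t ≤
      exp ((1 + C) * ∫ s, (1 + s ^ 2) ^ (-β / 4)) * (a 0 + b 0 + ∫ s in 0..t, g s) := by
  set ε : ℝ → ℝ := fun t => (1 + t ^ 2) ^ (-β / 4)
  have hε : ∀ t, HasDerivAt ε (-β / 4 * (1 + t ^ 2) ^ (-β / 4 - 1) * (2 * t)) t :=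
    hasDerivAt_one_add_sq_rpow _
  have hL := le_exp_integral_mul_of_hasDerivAt_le (L := fun t => ε t * a t + b t)
    (h := fun t => (1 + C) * ε t) ht
    (fun t => ((hε t).mul (ha t).hasDerivAt).add (hb t).hasDerivAt)
    (continuous_iff_continuousAt.2 fun t => (hε t).continuousAt.const_mul _)
    (fun s _ => by positivity) (hg t) (fun s hs => hg₀ s hs.1)
    fun s hs => lyapunov_deriv_le hC (by positivity)
      (mul_nonpos_of_nonpos_of_nonneg
        (mul_nonpos_of_nonpos_of_nonneg (by linarith) (by positivity)) (by linarith [hs.1]))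
      (ha₀ s hs.1.le) (hb₀ s hs.1.le) (hab s hs.1.le)
      (sqrt_one_add_sq_rpow_eq_sq (-β) s ▸ hba s hs.1.le)
  have hε₀ : ε 0 = 1 := by simp [ε]
  have hH : ∫ s in 0..t, (1 + C) * ε s ≤ (1 + C) * ∫ s, ε s := by
    rw [intervalIntegral.integral_const_mul, intervalIntegral.integral_of_le ht]
    refine mul_le_mul_of_nonneg_left (setIntegral_le_integral ?_ ?_) (by linarith)
    · exact integrable_one_add_sq_rpow (by linarith)
    · exact Filter.Eventually.of_forall fun s => by positivity
  have hG : 0 ≤ a 0 + b 0 + ∫ s in 0..t, g s := by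
    have : 0 ≤ ∫ s in 0..t, g s := intervalIntegral.integral_nonneg ht fun s hs => hg₀ s hs.1
    linarith [ha₀ 0 le_rfl, hb₀ 0 le_rfl]
  rw [hε₀, one_mul] at hL
  exact hL.trans (by gcongr)

theorem aux_lemma_beta_gt_two (C β a₀ b₀ : ℝ) (hC : 0 < C) (hβ : 2 < β)
    (g : ℝ → ℝ) (hgnn : ∀ t, 0 ≤ t → 0 ≤ g t)
    (hgint : ∀ t, IntervalIntegrable g volume 0 t)
    (a b : ℝ → ℝ) (had : Differentiable ℝ a) (hbd : Differentiable ℝ b)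
    (hann : ∀ t, 0 ≤ t → 0 ≤ a t) (hbnn : ∀ t, 0 ≤ t → 0 ≤ b t)
    (ha0 : a 0 = a₀) (hb0 : b 0 = b₀)
    (hab : ∀ t, 0 ≤ t → deriv a t ≤ b t)
    (hba : ∀ t, 0 ≤ t → deriv b t ≤ C * (Real.sqrt (1 + t ^ 2)) ^ (-β) * a t + g t) :
    ∃ C₁ C₂ : ℝ, 0 < C₁ ∧ 0 < C₂ ∧
      ∀ t, 0 ≤ t →
        b t ≤ C₁ + C₂ * (∫ s in (0:ℝ)..t, g s) ∧
        a t ≤ a₀ + C₁ * t + C₂ * (∫ s in (0:ℝ)..t, ∫ r in (0:ℝ)..s, g r) := by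
  set C₂ := exp ((1 + C) * ∫ s, (1 + s ^ 2) ^ (-β / 4))
  set C₁ := C₂ * (a₀ + b₀) + 1
  have hb : ∀ t, 0 ≤ t → b t ≤ C₁ + C₂ * ∫ s in 0..t, g s := fun t ht => by
    have hL := lyapunov_le_exp_mul hC.le hβ hgnn hgint had hbd hann hbnn hab hba ht
    have hεa : 0 ≤ (1 + t ^ 2) ^ (-β / 4) * a t := mul_nonneg (by positivity) (hann t ht)
    rw [ha0, hb0] at hL
    linarith
  have hC₁ : 0 < C₁ := by
    have := ha0 ▸ hann 0 le_rfl
    have := hb0 ▸ hbnn 0 le_rfl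
    positivity
  refine ⟨C₁, C₂, hC₁, exp_pos _, fun t ht => ⟨hb t ht, ?_⟩⟩
  rw [← ha0]
  exact le_add_mul_add_integral_primitive_of_deriv_le ht had
    (fun u v => (hgint u).symm.trans (hgint v)) fun s hs => (hab s hs.1.le).trans (hb s hs.1.le)
end

section
/- Suppose u : [0,T] → [0,∞) is differentiable with u(0) = 0 and u'(t) ≤ -u(t) log u(t) + 1/N for all t ∈ [0,T], where N ≥ 1 (with the convention 0·log 0 = 0). Define v(t) = u(t) N^{e^{-t}}. Then v(0) = 0 and v'(t) ≤ -v(t) log v(t) + 1 ≤ 1 + 1/e for all t ∈ [0,T], and consequently u(t) ≤ (1 + 1/e) t · N^{-e^{-t}} for all t ∈ [0,T]. -/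
/-!
The weight `w t = N ^ exp (-t)` solves `w' = -w log w` exactly, and `x ↦ -x log x` satisfies
`negMulLog (u w) = w · negMulLog u + u · negMulLog w`. Hence the product rule turns
`u' ≤ negMulLog u + 1/N` into `(u w)' ≤ negMulLog (u w) + w/N`, and `w ≤ N` for `t ≥ 0`.
Since `negMulLog ≤ 1/e` on `[0, ∞)`, `v = u w` grows at most at rate `1 + 1/e` from `v 0 = 0`.
-/

open Real Set

namespace Real

lemma negMulLog_le_exp_neg_one {x : ℝ} (hx : 0 ≤ x) : negMulLog x ≤ exp (-1) := by
  have h := negMulLog_le_one_sub_self (mul_nonneg (exp_pos 1).le hx)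
  rw [negMulLog_mul, negMulLog, log_exp] at h
  rw [exp_neg, ← one_div, le_div_iff₀ (exp_pos 1)]
  linarith

lemma hasDerivAt_rpow_exp_neg {N : ℝ} (hN : 0 < N) (t : ℝ) :
    HasDerivAt (fun s => N ^ exp (-s)) (negMulLog (N ^ exp (-t))) t := by
  convert ((hasDerivAt_neg t).exp).const_rpow hN using 1
  rw [negMulLog, log_rpow hN]
  ring

lemma rpow_exp_neg_le_self {N t : ℝ} (hN : 1 ≤ N) (ht : 0 ≤ t) : N ^ exp (-t) ≤ N :=
  (rpow_le_rpow_of_exponent_le hN (exp_le_one_iff.2 (neg_nonpos.2 ht))).trans_eq (rpow_one N)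

end Real

lemma deriv_mul_le_negMulLog_add {u w : ℝ → ℝ} {t c : ℝ} (hu : DifferentiableAt ℝ u t)
    (hw : HasDerivAt w (negMulLog (w t)) t) (hw0 : 0 ≤ w t)
    (hu' : deriv u t ≤ negMulLog (u t) + c) :
    deriv (fun s => u s * w s) t ≤ negMulLog (u t * w t) + c * w t := by
  rw [deriv_fun_mul hu hw.differentiableAt, hw.deriv, negMulLog_mul]
  nlinarith [mul_le_mul_of_nonneg_right hu' hw0]

lemma le_mul_of_deriv_le_of_map_zero {f : ℝ → ℝ} {C t : ℝ} (hf : Differentiable ℝ f)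
    (h0 : f 0 = 0) (ht : 0 ≤ t) (hf' : ∀ s ∈ Ioo 0 t, deriv f s ≤ C) : f t ≤ C * t := by
  have := (convex_Icc 0 t).image_sub_le_mul_sub_of_deriv_le hf.continuous.continuousOn
    hf.differentiableOn (by simpa using hf') 0 (left_mem_Icc.2 ht) t (right_mem_Icc.2 ht) ht
  simpa [h0] using this

theorem log_gronwall_ode_lemma_general (T N : ℝ) (hN : 1 ≤ N)
    (u : ℝ → ℝ) (hu : Differentiable ℝ u)
    (hunn : ∀ t ∈ Set.Icc 0 T, 0 ≤ u t) (hu0 : u 0 = 0)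
    (hu' : ∀ t ∈ Set.Icc 0 T, deriv u t ≤ -u t * Real.log (u t) + 1 / N)
    (v : ℝ → ℝ) (hv : v = fun t => u t * N ^ Real.exp (-t)) :
    v 0 = 0 ∧
    (∀ t ∈ Set.Icc 0 T,
        deriv v t ≤ -v t * Real.log (v t) + 1 ∧
        -v t * Real.log (v t) + 1 ≤ 1 + 1 / Real.exp 1) ∧
    ∀ t ∈ Set.Icc 0 T, u t ≤ (1 + 1 / Real.exp 1) * t * N ^ (-Real.exp (-t)) := by
  have hN0 : 0 < N := zero_lt_one.trans_le hN
  have hv0 : v 0 = 0 := by simp [hv, hu0]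
  have hv_diff : Differentiable ℝ v := by
    rw [hv]; exact fun t => (hu t).mul (hasDerivAt_rpow_exp_neg hN0 t).differentiableAt
  have hv' : ∀ t ∈ Icc 0 T, deriv v t ≤ negMulLog (v t) + 1 := by
    intro t ht
    subst hv
    refine (deriv_mul_le_negMulLog_add (hu t) (hasDerivAt_rpow_exp_neg hN0 t) (by positivity)
      (hu' t ht)).trans ?_
    grw [rpow_exp_neg_le_self hN ht.1, one_div_mul_cancel hN0.ne']
  have hv_le : ∀ t ∈ Icc 0 T, negMulLog (v t) + 1 ≤ 1 + 1 / exp 1 := by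
    intro t ht
    have hv_nonneg : 0 ≤ v t := by rw [hv]; exact mul_nonneg (hunn t ht) (by positivity)
    rw [one_div, ← exp_neg, add_comm]
    grw [negMulLog_le_exp_neg_one hv_nonneg]
  refine ⟨hv0, fun t ht => ⟨hv' t ht, hv_le t ht⟩, fun t ht => ?_⟩
  have hvt : v t ≤ (1 + 1 / exp 1) * t := le_mul_of_deriv_le_of_map_zero hv_diff hv0 ht.1
    fun s hs => (hv' s ⟨hs.1.le, hs.2.le.trans ht.2⟩).trans (hv_le s ⟨hs.1.le, hs.2.le.trans ht.2⟩)
  have hu_eq : u t = v t * N ^ (-exp (-t)) := by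
    rw [hv, rpow_neg hN0.le, mul_inv_cancel_right₀ (by positivity)]
  rw [hu_eq]
  gcongr

theorem log_gronwall_ode_lemma (T N : ℝ) (hT : 0 < T) (hN : 1 ≤ N)
    (u : ℝ → ℝ) (hu : Differentiable ℝ u)
    (hunn : ∀ t ∈ Set.Icc 0 T, 0 ≤ u t) (hu0 : u 0 = 0)
    (hu' : ∀ t ∈ Set.Icc 0 T, deriv u t ≤ -u t * Real.log (u t) + 1 / N)
    (v : ℝ → ℝ) (hv : v = fun t => u t * N ^ Real.exp (-t)) :
    v 0 = 0 ∧
    (∀ t ∈ Set.Icc 0 T,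
        deriv v t ≤ -v t * Real.log (v t) + 1 ∧
        -v t * Real.log (v t) + 1 ≤ 1 + 1 / Real.exp 1) ∧
    ∀ t ∈ Set.Icc 0 T, u t ≤ (1 + 1 / Real.exp 1) * t * N ^ (-Real.exp (-t)) :=
  log_gronwall_ode_lemma_general T N hN u hu hunn hu0 hu' v hv
end
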